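/- Let X_1, ..., X_n be i.i.d. Bernoulli(p) random variables and f : {0,1}^n → R a function that is 1-Lipschitz with respect to the Hamming distance. Then for all x > 0, P[f(X) - E[f(X)] ≤ -x] ≤ exp(-2x²/n). -/

import Mathlib

/-!
Integrating out the first coordinate splits `g - 𝔼 g` into the fluctuation of `g` along the first
coordinate and the centred average `h - 𝔼 h`, where `h b = ∫ g (y, b) dν₀(y)`. For each fixed
`b` the fluctuation has oscillation at most one, so by Hoeffding's lemma it is sub-Gaussian with
parameter `1/4` conditionally on `b`; the average `h` is again `1`-Lipschitz for the Hamming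
distance on the remaining coordinates. Induction on the number of coordinates gives the parameter
`n/4` for `g - 𝔼 g` under any product of probability measures, and the Chernoff bound then reads
`exp (-x² / (2 · n/4)) = exp (-2x²/n)`.
-/

open MeasureTheory ProbabilityTheory
open scoped NNReal

lemma hammingDist_cons_cons {α : Type*} [DecidableEq α] {n : ℕ} (y y' : α) (b b' : Fin n → α) :
    hammingDist (Fin.cons y b : Fin (n + 1) → α) (Fin.cons y' b')
      = (if y = y' then 0 else 1) + hammingDist b b' := by
  simp only [hammingDist, Finset.card_filter, Fin.sum_univ_succ, Fin.cons_zero, Fin.cons_succ]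
  by_cases h : y = y' <;> simp [h]

section FiniteSpaces

open Real

variable {β γ : Type*} [MeasurableSpace β] [MeasurableSingletonClass β] [Finite β]
  [MeasurableSpace γ] [MeasurableSingletonClass γ] [Finite γ]

lemma hasSubgaussianMGF_prod_of_sections {μ : Measure β} {ν : Measure γ} [IsProbabilityMeasure μ]
    [IsProbabilityMeasure ν] {F : β × γ → ℝ} {H : γ → ℝ} {c d : ℝ≥0}
    (hF : ∀ z, HasSubgaussianMGF (fun y ↦ F (y, z) - H z) c μ) (hH : HasSubgaussianMGF H d ν) :
    HasSubgaussianMGF F (c + d) (μ.prod ν) where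
  integrable_exp_mul _ := .of_finite
  mgf_le t := calc
    mgf F (μ.prod ν) t = ∫ z, exp (t * H z) * mgf (fun y ↦ F (y, z) - H z) μ t ∂ν := by
      rw [mgf, integral_prod_symm _ .of_finite]
      refine integral_congr_ae (ae_of_all _ fun z ↦ ?_)
      simp only [mgf, ← integral_const_mul, ← exp_add]
      ring_nf
    _ ≤ ∫ z, exp (t * H z) * exp (c * t ^ 2 / 2) ∂ν :=
      integral_mono .of_finite .of_finite fun z ↦ by gcongr; exact (hF z).mgf_le t
    _ ≤ exp (↑(c + d) * t ^ 2 / 2) := by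
      rw [integral_mul_const, NNReal.coe_add, add_mul, add_div, exp_add, mul_comm]
      gcongr
      exact hH.mgf_le t

lemma hasSubgaussianMGF_sub_integral_of_abs_sub_le_one (μ : Measure β) [IsProbabilityMeasure μ]
    {u : β → ℝ} (hu : ∀ y y', |u y - u y'| ≤ 1) :
    HasSubgaussianMGF (fun y ↦ u y - ∫ y, u y ∂μ) (1 / 4) μ := by
  have : Nonempty β := nonempty_of_isProbabilityMeasure μ
  obtain ⟨y₀, hy₀⟩ := Finite.exists_min u
  have h := hasSubgaussianMGF_of_mem_Icc (μ := μ) (a := u y₀) (b := u y₀ + 1)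
    Measurable.of_discrete.aemeasurable
    (ae_of_all _ fun y ↦ ⟨hy₀ y, by linarith [(abs_le.mp (hu y y₀)).2]⟩)
  convert h using 1
  norm_num

end FiniteSpaces

section HammingLipschitz

variable {α : Type*} [MeasurableSpace α] [MeasurableSingletonClass α] [Finite α] [DecidableEq α]

lemma abs_integral_cons_sub_integral_cons_le {n : ℕ} (ν : Measure α) [IsProbabilityMeasure ν]
    {g : (Fin (n + 1) → α) → ℝ} (hg : ∀ a b, |g a - g b| ≤ hammingDist a b)
    (b b' : Fin n → α) :
    |∫ y, g (Fin.cons y b) ∂ν - ∫ y, g (Fin.cons y b') ∂ν| ≤ hammingDist b b' := by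
  rw [← integral_sub .of_finite .of_finite]
  simpa using norm_integral_le_of_norm_le_const (μ := ν)
    (f := fun y ↦ g (Fin.cons y b) - g (Fin.cons y b')) (C := hammingDist b b')
    (ae_of_all _ fun y ↦ by simpa [hammingDist_cons_cons] using hg (Fin.cons y b) (Fin.cons y b'))

theorem hasSubgaussianMGF_sub_integral_pi_of_abs_sub_le_hammingDist :
    ∀ {n : ℕ} (ν : Fin n → Measure α) [∀ i, IsProbabilityMeasure (ν i)]
      {g : (Fin n → α) → ℝ}, (∀ a b, |g a - g b| ≤ hammingDist a b) →
      HasSubgaussianMGF (fun a ↦ g a - ∫ a, g a ∂Measure.pi ν) (n / 4) (Measure.pi ν)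
  | 0, ν, _, g, _ => by
    have hg : ∀ a, g a - ∫ a, g a ∂Measure.pi ν = 0 := fun a ↦ by
      rw [show (fun a' ↦ g a') = fun _ ↦ g a from funext fun a' ↦ congrArg g (Subsingleton.elim a' a)]
      simp
    simp [hg]
  | n + 1, ν, _, g, hg => by
    set e := MeasurableEquiv.piFinSuccAbove (fun _ ↦ α) 0
    have he : MeasurePreserving e (Measure.pi ν) ((ν 0).prod (Measure.pi fun j ↦ ν j.succ)) := by
      simpa only [Fin.succAbove_zero] using measurePreserving_piFinSuccAbove ν 0
    set h : (Fin n → α) → ℝ := fun b ↦ ∫ y, g (Fin.cons y b) ∂ν 0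
    have hmean : ∫ a, g a ∂Measure.pi ν = ∫ b, h b ∂Measure.pi fun j ↦ ν j.succ := by
      rw [← he.symm.integral_comp', integral_prod_symm _ .of_finite]
      simp [h, e, Fin.consEquiv]
    have hsection (b : Fin n → α) :
        HasSubgaussianMGF (fun y ↦ g (Fin.cons y b) - h b) (1 / 4) (ν 0) :=
      hasSubgaussianMGF_sub_integral_of_abs_sub_le_one (ν 0) fun y y' ↦
        (hg _ _).trans (by rw [hammingDist_cons_cons]; split_ifs <;> simp)
    have hprod := hasSubgaussianMGF_prod_of_sections
      (F := fun q ↦ g (Fin.cons q.1 q.2) - ∫ a, g a ∂Measure.pi ν)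
      (H := fun b ↦ h b - ∫ b, h b ∂Measure.pi fun j ↦ ν j.succ)
      (fun b ↦ by convert hsection b using 2 with y; rw [hmean]; ring)
      (hasSubgaussianMGF_sub_integral_pi_of_abs_sub_le_hammingDist (fun j ↦ ν j.succ)
        (abs_integral_cons_sub_integral_cons_le (ν 0) hg))
    rw [← he.map_eq] at hprod
    convert hprod.of_map e.measurable.aemeasurable using 1
    · ext a
      simp [e, Fin.cons_self_tail]
    · push_cast
      ring

end HammingLipschitz

theorem stmt8_general {Ω : Type*} [MeasurableSpace Ω] (P : Measure Ω) [IsProbabilityMeasure P]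
    (n : ℕ) (X : Fin n → Ω → Bool) (hmeas : ∀ i, Measurable (X i))
    (hindep : ProbabilityTheory.iIndepFun X P)
    (f : (Fin n → Bool) → ℝ)
    (hlip : ∀ a b : Fin n → Bool, |f a - f b| ≤ (hammingDist a b : ℝ)) :
    ∀ x : ℝ, 0 < x →
      P {ω | f (fun i => X i ω) - ∫ ω', f (fun i => X i ω') ∂P ≤ -x}
        ≤ ENNReal.ofReal (Real.exp (-2 * x ^ 2 / n)) := by
  intro x hx
  have hX : Measurable fun ω i ↦ X i ω := measurable_pi_lambda _ hmeas
  have _ (i : Fin n) : IsProbabilityMeasure (P.map (X i)) :=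
    Measure.isProbabilityMeasure_map (hmeas i).aemeasurable
  have hlaw := hindep.map_fun_eq_pi_map fun i ↦ (hmeas i).aemeasurable
  have hsub := hasSubgaussianMGF_sub_integral_pi_of_abs_sub_le_hammingDist (fun i ↦ P.map (X i))
    (g := fun a ↦ -f a) fun a b ↦ by rw [neg_sub_neg, hammingDist_comm]; exact hlip b a
  rw [← hlaw, integral_neg] at hsub
  have hevent : {ω | f (fun i ↦ X i ω) - ∫ ω', f (fun i ↦ X i ω') ∂P ≤ -x}
      = (fun ω i ↦ X i ω) ⁻¹' {a | x ≤ -f a - -∫ a, f a ∂P.map fun ω i ↦ X i ω} := by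
    ext ω
    rw [Set.mem_preimage, Set.mem_ofPred_eq, Set.mem_ofPred_eq,
      integral_map hX.aemeasurable Measurable.of_discrete.aestronglyMeasurable]
    exact ⟨fun h ↦ by linarith, fun h ↦ by linarith⟩
  rw [hevent, ← Measure.map_apply hX .of_discrete, ← ofReal_measureReal]
  gcongr
  convert hsub.measure_ge_le hx.le using 2
  push_cast
  ring

/-- McDiarmid's inequality for i.i.d. Bernoulli(p) variables and a
function `f` that is 1-Lipschitz for the Hamming distance:
`P[f(X) - E[f(X)] ≤ -x] ≤ exp(-2x²/n)` for all `x > 0`. -/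
theorem stmt8 {Ω : Type*} [MeasurableSpace Ω] (P : Measure Ω) [IsProbabilityMeasure P]
    (n : ℕ) (p : ℝ) (hp0 : 0 ≤ p) (hp1 : p ≤ 1)
    (X : Fin n → Ω → Bool) (hmeas : ∀ i, Measurable (X i))
    (hindep : ProbabilityTheory.iIndepFun X P)
    (hbern : ∀ i, P {ω | X i ω = true} = ENNReal.ofReal p)
    (f : (Fin n → Bool) → ℝ)
    (hlip : ∀ a b : Fin n → Bool, |f a - f b| ≤ (hammingDist a b : ℝ)) :
    ∀ x : ℝ, 0 < x →
      P {ω | f (fun i => X i ω) - ∫ ω', f (fun i => X i ω') ∂P ≤ -x}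
        ≤ ENNReal.ofReal (Real.exp (-2 * x ^ 2 / n)) :=
  stmt8_general P n X hmeas hindep f hlip
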